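/- arXiv:1508.05714 — 2 statements merged into one kernel-verified Lean document; each statement's English description precedes it below -/
import Mathlib

section
/- For every integer n ≥ 3, the number ℓ_n of primes p with z(p) = n satisfies ℓ_n < n·log α / log n, where α = 1 + √2. -/
/-- The Pell sequence: `P 0 = 0`, `P 1 = 1`, `P (n+2) = 2 * P (n+1) + P n`. -/
def pell : ℕ → ℕ
  | 0 => 0
  | 1 => 1
  | n + 2 => 2 * pell (n + 1) + pell n

/-- The order of appearance of `n` in the Pell sequence: the smallest positive
integer `k` such that `n ∣ P k`. -/
noncomputable def zAppear (n : ℕ) : ℕ := sInf {k : ℕ | 0 < k ∧ n ∣ pell k}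

/-!
Every prime `p` with `z(p) = n` divides `P_n`, and `z(p) ≤ p + 1`: in a ring of characteristic
`p` containing a square root `s` of `2`, Euler's criterion gives `s ^ p = ± s`, so Frobenius
fixes or swaps `1 ± s`, and the Binet formula `P_k · 2s = (1 + s) ^ k - (1 - s) ^ k` shows
that `p` divides `P_{p-1}` or `P_{p+1}`. Thus the `ℓ_n` primes are distinct, all at least
`n - 1`, and their product divides `P_n ≤ α ^ (n - 1)`; hence
`(n - 1) n ^ ℓ_n ≤ n α ^ (n - 1)`, which forces `n ^ ℓ_n < α ^ n`.
-/

open Finset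

theorem pell_pos {n : ℕ} (hn : 0 < n) : 0 < pell n := by
  induction n using Nat.twoStepInduction with
  | zero => omega
  | one => decide
  | more k _ ih => exact Nat.add_pos_left (Nat.mul_pos two_pos (ih k.succ_pos)) _

theorem pell_succ_le_pow (n : ℕ) : (pell (n + 1) : ℝ) ≤ (1 + √2) ^ n := by
  have hsq : (1 + √2) ^ 2 = 2 * (1 + √2) + 1 := by
    nlinarith [Real.sq_sqrt (show (0 : ℝ) ≤ 2 by norm_num)]
  induction n using Nat.twoStepInduction with
  | zero => simp [pell]
  | one => norm_num [pell]; linarith [Real.one_lt_sqrt_two]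
  | more k ih₁ ih₂ =>
    calc (pell (k + 3) : ℝ) = 2 * pell (k + 2) + pell (k + 1) := by simp [pell]
      _ ≤ 2 * (1 + √2) ^ (k + 1) + (1 + √2) ^ k := by gcongr
      _ = (1 + √2) ^ (k + 2) := by rw [pow_add _ k 2, hsq]; ring

section SqrtTwo

variable {R : Type*} [CommRing R] {s : R}

theorem pell_cast_mul_eq_sub_pow (hs : s ^ 2 = 2) (k : ℕ) :
    (pell k : R) * (2 * s) = (1 + s) ^ k - (1 - s) ^ k := by
  induction k using Nat.twoStepInduction with
  | zero => simp [pell]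
  | one => simp [pell]; ring
  | more k ih₁ ih₂ =>
    rw [show pell (k + 2) = 2 * pell (k + 1) + pell k from rfl]
    push_cast
    linear_combination 2 * ih₂ + ih₁ + ((1 - s) ^ k - (1 + s) ^ k) * hs

theorem pell_pred_cast_mul_eq_zero (hs : s ^ 2 = 2) {q : ℕ} (hq : 0 < q)
    (h₁ : (1 + s) ^ q = 1 + s) (h₂ : (1 - s) ^ q = 1 - s) :
    (pell (q - 1) : R) * (2 * s) = 0 := by
  obtain ⟨k, rfl⟩ : ∃ k, q = k + 1 := ⟨q - 1, by omega⟩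
  rw [pow_succ] at h₁ h₂
  rw [Nat.add_sub_cancel, pell_cast_mul_eq_sub_pow hs]
  -- `1 ± s` are units, as `(1 + s) (1 - s) = -1`, so both `k`-th powers are `1`
  linear_combination ((1 - s) ^ k - (1 + s) ^ k) * hs - (1 - s) * h₁ + (1 + s) * h₂

theorem pell_succ_cast_mul_eq_zero (hs : s ^ 2 = 2) {q : ℕ}
    (h₁ : (1 + s) ^ q = 1 - s) (h₂ : (1 - s) ^ q = 1 + s) :
    (pell (q + 1) : R) * (2 * s) = 0 := by
  rw [pell_cast_mul_eq_sub_pow hs, pow_succ, pow_succ, h₁, h₂]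
  ring

variable {p : ℕ} [CharP R p]

theorem dvd_of_natCast_mul_eq_zero (hp : p.Prime) (hp2 : p ≠ 2) (hs : s ^ 2 = 2) {k : ℕ}
    (h : (k : R) * (2 * s) = 0) : p ∣ k := by
  have h8 : ((k * 2 ^ 3 : ℕ) : R) = 0 := by
    push_cast
    linear_combination (2 * s) * h - 4 * k * hs
  rcases (Nat.Prime.dvd_mul hp).mp ((CharP.cast_eq_zero_iff R p _).mp h8) with h | h
  · exact h
  · exact absurd ((Nat.prime_dvd_prime_iff_eq hp Nat.prime_two).mp (hp.dvd_of_dvd_pow h)) hp2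

theorem pow_char_eq_self_or_neg [Fact p.Prime] (hp2 : p ≠ 2) (hs : s ^ 2 = 2) :
    s ^ p = s ∨ s ^ p = -s := by
  have hodd : p = 2 * (p / 2) + 1 := (Nat.two_mul_div_two_add_one_of_odd
    ((Fact.out : p.Prime).odd_of_ne_two hp2)).symm
  have htwo : (2 : ZMod p) ≠ 0 := Ring.two_ne_zero (by rwa [ZMod.ringChar_zmod_n])
  have hpow : s ^ p = (2 : R) ^ (p / 2) * s := by
    rw [← hs, ← pow_mul, ← pow_succ, ← hodd]
  have heuler := (ZMod.pow_div_two_eq_neg_one_or_one p htwo).imp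
    (congrArg (ZMod.castHom (dvd_refl p) R)) (congrArg (ZMod.castHom (dvd_refl p) R))
  simp only [map_pow, map_ofNat, map_neg, map_one] at heuler
  rcases heuler with h | h <;> simp [hpow, h]

theorem dvd_pell_pred_or_succ_of_sq_eq_two [Fact p.Prime] (hp2 : p ≠ 2) (hs : s ^ 2 = 2) :
    p ∣ pell (p - 1) ∨ p ∣ pell (p + 1) := by
  have hp : p.Prime := Fact.out
  have h₁ : (1 + s) ^ p = 1 + s ^ p := by rw [add_pow_char, one_pow]
  have h₂ : (1 - s) ^ p = 1 - s ^ p := by rw [sub_pow_char, one_pow]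
  rcases pow_char_eq_self_or_neg hp2 hs with h | h <;> rw [h] at h₁ h₂
  · exact .inl <| dvd_of_natCast_mul_eq_zero hp hp2 hs <|
      pell_pred_cast_mul_eq_zero hs hp.pos h₁ h₂
  · exact .inr <| dvd_of_natCast_mul_eq_zero hp hp2 hs <|
      pell_succ_cast_mul_eq_zero hs (by rw [h₁, sub_eq_add_neg]) (by rw [h₂, sub_neg_eq_add])

end SqrtTwo

open Polynomial in
theorem Nat.Prime.dvd_pell_pred_or_succ {p : ℕ} (hp : p.Prime) (hp2 : p ≠ 2) :
    p ∣ pell (p - 1) ∨ p ∣ pell (p + 1) := by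
  have : Fact p.Prime := ⟨hp⟩
  set f : (ZMod p)[X] := X ^ 2 - C 2
  have hdeg : f.degree ≠ 0 := by
    rw [show f.degree = 2 by unfold f; compute_degree!]
    decide
  have : CharP (AdjoinRoot f) p :=
    charP_of_injective_algebraMap (AdjoinRoot.of.injective_of_degree_ne_zero hdeg) p
  refine dvd_pell_pred_or_succ_of_sq_eq_two (s := AdjoinRoot.root f) hp2 ?_
  have := AdjoinRoot.eval₂_root f
  simp only [f, eval₂_sub, eval₂_pow, eval₂_X, eval₂_C, sub_eq_zero] at this
  exact this.trans (map_ofNat _ 2)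

theorem Nat.Prime.exists_dvd_pell_le_succ {p : ℕ} (hp : p.Prime) :
    ∃ k, 0 < k ∧ k ≤ p + 1 ∧ p ∣ pell k := by
  rcases eq_or_ne p 2 with rfl | hp2
  · exact ⟨2, two_pos, by omega, by decide⟩
  rcases hp.dvd_pell_pred_or_succ hp2 with h | h
  · exact ⟨p - 1, by have := hp.two_le; omega, by omega, h⟩
  · exact ⟨p + 1, p.succ_pos, le_rfl, h⟩

theorem Nat.Prime.zAppear_le_succ {p : ℕ} (hp : p.Prime) : zAppear p ≤ p + 1 := by
  obtain ⟨k, hk, hkp, hdvd⟩ := hp.exists_dvd_pell_le_succ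
  exact (Nat.sInf_le (show k ∈ {k | 0 < k ∧ p ∣ pell k} from ⟨hk, hdvd⟩)).trans hkp

theorem Nat.Prime.dvd_pell_zAppear {p : ℕ} (hp : p.Prime) : p ∣ pell (zAppear p) := by
  obtain ⟨k, hk, -, hdvd⟩ := hp.exists_dvd_pell_le_succ
  exact (Nat.sInf_mem (s := {k | 0 < k ∧ p ∣ pell k}) ⟨k, hk, hdvd⟩).2

/-- `m (m + 1) ^ (#T - 1) ≤ ∏ p ∈ T, p`, multiplied through by `m + 1` to avoid truncated
subtraction at `T = ∅`. -/
theorem Finset.mul_succ_pow_card_le_succ_mul_prod {T : Finset ℕ} {m : ℕ}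
    (hT : ∀ p ∈ T, m ≤ p) : m * (m + 1) ^ #T ≤ (m + 1) * ∏ p ∈ T, p := by
  by_cases hm : m ∈ T
  · have hbig : ∀ p ∈ T.erase m, m + 1 ≤ p := fun p hp =>
      lt_of_le_of_ne (hT p (mem_of_mem_erase hp)) (ne_of_mem_erase hp).symm
    rw [← mul_prod_erase T (fun p => p) hm, ← card_erase_add_one hm, pow_succ]
    calc m * ((m + 1) ^ #(T.erase m) * (m + 1))
        = (m + 1) * (m * (m + 1) ^ #(T.erase m)) := by ring
      _ ≤ (m + 1) * (m * ∏ p ∈ T.erase m, p) := by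
        gcongr; exact pow_card_le_prod _ _ _ hbig
  · have hbig : ∀ p ∈ T, m + 1 ≤ p := fun p hp =>
      lt_of_le_of_ne (hT p hp) fun h => hm (h ▸ hp)
    calc m * (m + 1) ^ #T ≤ (m + 1) * (m + 1) ^ #T := by gcongr; omega
      _ ≤ (m + 1) * ∏ p ∈ T, p := by gcongr; exact pow_card_le_prod _ _ _ hbig

theorem pow_lt_pow_of_mul_pow_le_mul_pell {n l : ℕ} (hn : 3 ≤ n)
    (h : (n - 1) * n ^ l ≤ n * pell n) : (n : ℝ) ^ l < (1 + √2) ^ n := by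
  have hn' : (3 : ℝ) ≤ n := by exact_mod_cast hn
  have hpell : (pell n : ℝ) ≤ (1 + √2) ^ (n - 1) := by
    simpa [Nat.sub_add_cancel (by omega : 1 ≤ n)] using pell_succ_le_pow (n - 1)
  have hα : (n : ℝ) < (n - 1) * (1 + √2) := by
    nlinarith [Real.sqrt_nonneg 2, Real.sq_sqrt (show (0 : ℝ) ≤ 2 by norm_num)]
  have hcast : ((n : ℝ) - 1) * n ^ l ≤ n * pell n := by
    have := (Nat.cast_le (α := ℝ)).mpr h
    push_cast [Nat.cast_sub (by omega : 1 ≤ n)] at this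
    exact this
  refine lt_of_mul_lt_mul_left ?_ (by linarith : (0 : ℝ) ≤ n - 1)
  calc ((n : ℝ) - 1) * n ^ l ≤ n * (1 + √2) ^ (n - 1) := hcast.trans (by gcongr)
    _ < (n - 1) * (1 + √2) * (1 + √2) ^ (n - 1) := by gcongr
    _ = (n - 1) * (1 + √2) ^ n := by
      rw [mul_assoc, ← pow_succ', Nat.sub_add_cancel (by omega : 1 ≤ n)]

/-- For every integer `n ≥ 3`, the number `ℓ_n` of primes `p` with `z p = n`
satisfies `ℓ_n < n log α / log n`, where `α = 1 + √2`. -/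
theorem card_primes_zAppear_eq_lt (n : ℕ) (hn : 3 ≤ n) :
    ((({p : ℕ | p.Prime ∧ zAppear p = n}).ncard : ℝ)) <
      (n : ℝ) * Real.log (1 + Real.sqrt 2) / Real.log n := by
  have hpell : 0 < pell n := pell_pos (by omega)
  set T := {p ∈ (pell n).primeFactors | zAppear p = n}
  have hS : {p : ℕ | p.Prime ∧ zAppear p = n} = T := by
    ext p
    simp only [T, coe_filter, Nat.mem_primeFactors, Set.mem_ofPred_eq]
    exact ⟨fun ⟨hp, hz⟩ => ⟨⟨hp, hz ▸ hp.dvd_pell_zAppear, hpell.ne'⟩, hz⟩,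
      fun ⟨⟨hp, _⟩, hz⟩ => ⟨hp, hz⟩⟩
  have hT : ∀ p ∈ T, n - 1 ≤ p := fun p hp => by
    obtain ⟨hpf, hz⟩ := mem_filter.mp hp
    have := (Nat.prime_of_mem_primeFactors hpf).zAppear_le_succ
    omega
  have hprod : ∏ p ∈ T, p ≤ pell n := Nat.le_of_dvd hpell <|
    (prod_dvd_prod_of_subset _ _ _ (filter_subset _ _)).trans (Nat.prod_primeFactors_dvd _)
  have hcount := mul_succ_pow_card_le_succ_mul_prod hT
  rw [Nat.sub_add_cancel (by omega : 1 ≤ n)] at hcount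
  have hpow := pow_lt_pow_of_mul_pow_le_mul_pell hn (hcount.trans (by gcongr))
  have hlog : 0 < Real.log n := Real.log_pos (by exact_mod_cast (by omega : 1 < n))
  rw [hS, Set.ncard_coe_finset, lt_div_iff₀ hlog]
  simpa [Real.log_pow] using Real.log_lt_log (by positivity) hpow
end

section
/- If n is an odd positive integer and q is any prime dividing P_n, then q ≡ 1 (mod 4). -/
lemma pell_add : ∀ n m, pell (m + n + 1) = pell (m + 1) * pell (n + 1) + pell m * pell n
  | 0, m => by simp [pell]
  | 1, m => by
      show pell (m + 2) = _
      simp [pell]; ring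
  | n + 2, m => by
      have h1 : pell (m + n + 2) = pell (m + 1) * pell (n + 2) + pell m * pell (n + 1) :=
        pell_add (n + 1) m
      have h2 : pell (m + n + 1) = pell (m + 1) * pell (n + 1) + pell m * pell n :=
        pell_add n m
      show pell (m + n + 3) = pell (m + 1) * pell (n + 3) + pell m * pell (n + 2)
      rw [show pell (m + n + 3) = 2 * pell (m + n + 2) + pell (m + n + 1) from rfl,
        show pell (n + 3) = 2 * pell (n + 2) + pell (n + 1) from rfl, h1, h2,
        show pell (n + 2) = 2 * pell (n + 1) + pell n from rfl]
      ring

lemma pell_coprime : ∀ k, Nat.Coprime (pell k) (pell (k + 1))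
  | 0 => by simp [pell]
  | k + 1 => by
      have h := pell_coprime k
      show Nat.gcd (pell (k + 1)) (pell (k + 2)) = 1
      rw [show pell (k + 2) = pell k + 2 * pell (k + 1) from by
            rw [show pell (k + 2) = 2 * pell (k + 1) + pell k from rfl]; ring,
        Nat.gcd_add_mul_right_right]
      exact Nat.Coprime.symm h

lemma pell_mod_two : ∀ m, pell m % 2 = m % 2
  | 0 => rfl
  | 1 => rfl
  | m + 2 => by
      have h := pell_mod_two m
      have : pell (m + 2) = 2 * pell (m + 1) + pell m := rfl
      omega

/-- If `n` is an odd positive integer and `q` is a prime dividing `P n`,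
then `q ≡ 1 (mod 4)`. -/
theorem prime_dvd_pell_odd_mod_four (n q : ℕ) (hn : 0 < n) (hodd : Odd n)
    (hq : q.Prime) (hdvd : q ∣ pell n) : q % 4 = 1 := by
  obtain ⟨k, hk⟩ := hodd
  have hid : pell n = pell k ^ 2 + pell (k + 1) ^ 2 := by
    rw [hk, show 2 * k + 1 = k + k + 1 from by ring, pell_add k k]; ring
  -- q is odd
  have hq2 : q ≠ 2 := by
    rintro rfl
    have h1 := pell_mod_two n
    have h2 : n % 2 = 1 := by omega
    omega
  have hqodd : q % 2 = 1 := Nat.odd_iff.mp (hq.odd_of_ne_two hq2)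
  haveI : Fact q.Prime := ⟨hq⟩
  have hb : ¬ q ∣ pell (k + 1) := by
    intro hbd
    have ha2 : q ∣ pell k ^ 2 := by
      have hb2 : q ∣ pell (k + 1) ^ 2 := hbd.trans (dvd_pow_self _ two_ne_zero)
      have := hid ▸ hdvd
      simpa using Nat.dvd_sub this hb2
    have ha : q ∣ pell k := hq.dvd_of_dvd_pow ha2
    have := Nat.dvd_gcd ha hbd
    rw [pell_coprime k] at this
    exact hq.one_lt.ne' (Nat.dvd_one.mp this)
  have hbz : (pell (k + 1) : ZMod q) ≠ 0 := by
    rwa [Ne, ZMod.natCast_eq_zero_iff]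
  have hsum : (pell k : ZMod q) ^ 2 + (pell (k + 1) : ZMod q) ^ 2 = 0 := by
    have : ((pell n : ℕ) : ZMod q) = 0 := (ZMod.natCast_eq_zero_iff _ _).mpr hdvd
    rw [hid] at this
    push_cast at this
    exact this
  have hsq : IsSquare (-1 : ZMod q) := by
    refine ⟨(pell k : ZMod q) * (pell (k + 1) : ZMod q)⁻¹, ?_⟩
    field_simp
    linear_combination -hsum
  have h3 : q % 4 ≠ 3 := (ZMod.exists_sq_eq_neg_one_iff).mp hsq
  omega
end
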